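/- arXiv:1503.08096 — 2 statements merged into one kernel-verified Lean document; each statement's English description precedes it below -/
import Mathlib

section
/- Let X_1, X_2, … be i.i.d. random variables with values in {1,…,r}, P(X_i = k) = p_k where 0 < p_k < 1 for all k and ∑_k p_k = 1. Let B_1 be the first position n such that some letter ℓ appears in h consecutive positions among X_1…X_n (the first completed h-run). Then E(B_1) = 1 / ∑_{i=1}^r [1/(p_i^{−1} + p_i^{−2} + ⋯ + p_i^{−h})]. -/
/-!
Fix a letter `j` of probability `q` and a time `m`. Splitting the event "no run among the first
`m` letters" by independence of each new letter from the past, according to how long the streak of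
`j`s begun at `m` lasts, gives
`P(B₁ > m) = ∑_{k=1}^h q⁻ᵏ P(B₁ = m + k, X_m = ⋯ = X_{m+k-1} = j)`.
Summing over `m`, the `k`-th term becomes `q⁻ᵏ P(the first run is a run of j)`, so
`E B₁ = c_j P(first run is of j)` with `c_j = ∑_{k=1}^h q⁻ᵏ`. In particular `E B₁ < ∞`, so a run
occurs almost surely, the probabilities `P(first run is of j)` add up to one, and
`E B₁ = (∑_j c_j⁻¹)⁻¹`.
-/

open MeasureTheory ProbabilityTheory
open scoped ENNReal

lemma Finset.sum_Icc_pow_mul_of_recurrence {R : Type*} [CommSemiring R] {a b : ℕ → R} {c : R}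
    {h : ℕ} (hrec : ∀ k < h, a k = c * (a (k + 1) + b (k + 1))) (htop : a h = 0) :
    a 0 = ∑ k ∈ Finset.Icc 1 h, c ^ k * b k := by
  have key : ∀ e ≤ h, a 0 = c ^ e * a e + ∑ k ∈ Finset.Icc 1 e, c ^ k * b k := by
    intro e he
    induction e with
    | zero => simp
    | succ e ih =>
      rw [ih (by omega), hrec e (by omega), Finset.sum_Icc_succ_top (by omega)]
      ring
  simpa [htop] using key h le_rfl

lemma ENNReal.eq_inv_sum_inv_of_forall_eq_mul {ι : Type*} {s : Finset ι} {A : ℝ≥0∞}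
    {c w : ι → ℝ≥0∞} (hc0 : ∀ i ∈ s, c i ≠ 0) (hctop : ∀ i ∈ s, c i ≠ ⊤)
    (hA : ∀ i ∈ s, A = c i * w i) (hw : ∑ i ∈ s, w i = 1) :
    A = (∑ i ∈ s, (c i)⁻¹)⁻¹ := by
  refine ENNReal.eq_inv_of_mul_eq_one_left ?_
  rw [Finset.mul_sum, ← hw]
  refine Finset.sum_congr rfl fun i hi => ?_
  rw [hA i hi, mul_comm, ← mul_assoc, ENNReal.inv_mul_cancel (hc0 i hi) (hctop i hi), one_mul]

lemma MeasureTheory.lintegral_natCast_eq_tsum_measure_lt {Ω : Type*} [MeasurableSpace Ω]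
    {μ : Measure Ω} {τ : Ω → ℕ} (hτ : Measurable τ) :
    ∫⁻ ω, (τ ω : ℝ≥0∞) ∂μ = ∑' n, μ {ω | n < τ ω} := by
  have hmeas : ∀ n, MeasurableSet {ω | n < τ ω} := fun n => hτ measurableSet_Ioi
  have hpt : ∀ ω, (τ ω : ℝ≥0∞) = ∑' n, {ω | n < τ ω}.indicator 1 ω := by
    intro ω
    rw [tsum_eq_sum (s := Finset.range (τ ω))
      (fun n hn => Set.indicator_of_notMem (by simpa using hn) _)]
    simp [Set.indicator_apply, Finset.filter_true_of_mem (fun n hn => Finset.mem_range.1 hn)]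
  simp_rw [hpt]
  rw [lintegral_tsum fun n => (measurable_one.indicator (hmeas n)).aemeasurable]
  exact tsum_congr fun n => lintegral_indicator_one (hmeas n)

lemma ENNReal.ofReal_one_div_sum_one_div {ι : Type*} {s : Finset ι} (hs : s.Nonempty)
    {c : ι → ℝ} (hc : ∀ i ∈ s, 0 < c i) :
    ENNReal.ofReal (1 / ∑ i ∈ s, 1 / c i) = (∑ i ∈ s, (ENNReal.ofReal (c i))⁻¹)⁻¹ := by
  rw [one_div, ENNReal.ofReal_inv_of_pos (Finset.sum_pos (fun i hi => one_div_pos.2 (hc i hi)) hs),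
    ENNReal.ofReal_sum_of_nonneg fun i hi => (one_div_pos.2 (hc i hi)).le]
  exact congrArg _ (Finset.sum_congr rfl fun i hi => by
    rw [one_div, ENNReal.ofReal_inv_of_pos (hc i hi)])

lemma ENNReal.ofReal_sum_one_div_pow {x : ℝ} (hx : 0 < x) (s : Finset ℕ) :
    ENNReal.ofReal (∑ k ∈ s, (1 / x) ^ k) = ∑ k ∈ s, (ENNReal.ofReal x)⁻¹ ^ k := by
  rw [ENNReal.ofReal_sum_of_nonneg fun k _ => by positivity]
  exact Finset.sum_congr rfl fun k _ => by
    rw [ENNReal.ofReal_pow (by positivity), one_div, ENNReal.ofReal_inv_of_pos hx]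

namespace Runs

section Words

variable {Ω α : Type*} {X : ℕ → Ω → α} {h : ℕ} {ω : Ω}

def RunBy (X : ℕ → Ω → α) (h : ℕ) (ω : Ω) (n : ℕ) : Prop :=
  ∃ ℓ : α, ∃ m, m + h ≤ n ∧ ∀ k < h, X (m + k) ω = ℓ

/-- Junk value: `firstRun X h ω = 0` when `ω` contains no `h`-run at all. -/
noncomputable def firstRun (X : ℕ → Ω → α) (h : ℕ) (ω : Ω) : ℕ := sInf {n | RunBy X h ω n}

def noRun (X : ℕ → Ω → α) (h n : ℕ) : Set Ω := {ω | ¬ RunBy X h ω n}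

def runOccurs (X : ℕ → Ω → α) (h : ℕ) : Set Ω := {ω | ∃ n, RunBy X h ω n}

def firstRunOf (X : ℕ → Ω → α) (h : ℕ) (j : α) : Set Ω :=
  {ω | ω ∈ runOccurs X h ∧ X (firstRun X h ω - 1) ω = j}

def streak (X : ℕ → Ω → α) (j : α) (m k : ℕ) : Set Ω := {ω | ∀ i < k, X (m + i) ω = j}

lemma RunBy.mono {a b : ℕ} (ha : RunBy X h ω a) (hab : a ≤ b) : RunBy X h ω b := by
  obtain ⟨ℓ, m, hm, hrun⟩ := ha
  exact ⟨ℓ, m, hm.trans hab, hrun⟩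

lemma runBy_firstRun (hω : ω ∈ runOccurs X h) : RunBy X h ω (firstRun X h ω) :=
  Nat.sInf_mem hω

lemma firstRun_le {n : ℕ} (hn : RunBy X h ω n) : firstRun X h ω ≤ n := Nat.sInf_le hn

lemma mem_runOccurs_of_firstRun_pos (hpos : 0 < firstRun X h ω) : ω ∈ runOccurs X h :=
  Nat.nonempty_of_pos_sInf hpos

lemma lt_firstRun_iff (hω : ω ∈ runOccurs X h) {n : ℕ} :
    n < firstRun X h ω ↔ ¬ RunBy X h ω n :=
  ⟨fun hlt hn => (firstRun_le hn).not_gt hlt,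
    fun hn => not_le.1 fun hle => hn ((runBy_firstRun hω).mono hle)⟩

lemma firstRun_eq_zero (hω : ω ∉ runOccurs X h) : firstRun X h ω = 0 :=
  Nat.eq_zero_of_not_pos fun hpos => hω (mem_runOccurs_of_firstRun_pos hpos)

lemma setOf_lt_firstRun (n : ℕ) : {ω | n < firstRun X h ω} = noRun X h n ∩ runOccurs X h := by
  ext ω
  by_cases hω : ω ∈ runOccurs X h
  · simp [noRun, lt_firstRun_iff hω, hω]
  · simp [firstRun_eq_zero hω, hω]

lemma runOccurs_eq_iUnion_compl_noRun : runOccurs X h = ⋃ n, (noRun X h n)ᶜ := by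
  ext; simp [runOccurs, noRun]

lemma noRun_eq_union (n : ℕ) :
    noRun X h n = noRun X h (n + 1) ∪ {ω | firstRun X h ω = n + 1} := by
  ext ω
  by_cases hω : ω ∈ runOccurs X h
  · simp only [noRun, Set.mem_union, Set.mem_ofPred_eq, ← lt_firstRun_iff hω]
    omega
  · have hno : ∀ n, ¬ RunBy X h ω n := fun n hn => hω ⟨n, hn⟩
    simp [noRun, hno]

lemma disjoint_noRun_firstRun_eq (n : ℕ) :
    Disjoint (noRun X h (n + 1)) {ω | firstRun X h ω = n + 1} :=
  Set.disjoint_left.2 fun _ hno hτ => hno (hτ ▸ runBy_firstRun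
    (mem_runOccurs_of_firstRun_pos (hτ ▸ n.succ_pos)))

lemma streak_zero (j : α) (m : ℕ) : streak X j m 0 = Set.univ := by
  ext; simp [streak]

lemma streak_succ (j : α) (m k : ℕ) :
    streak X j m (k + 1) = streak X j m k ∩ {ω | X (m + k) ω = j} := by
  ext ω
  simp only [streak, Set.mem_inter_iff, Set.mem_ofPred_eq]
  exact ⟨fun hs => ⟨fun i hi => hs i (by omega), hs k (by omega)⟩,
    fun ⟨hs, hk⟩ i hi => (Nat.lt_succ_iff_lt_or_eq.1 hi).elim (hs i) (· ▸ hk)⟩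

lemma noRun_inter_streak_self (j : α) (m : ℕ) : noRun X h (m + h) ∩ streak X j m h = ∅ :=
  Set.eq_empty_of_forall_notMem fun _ ⟨hno, hs⟩ => hno ⟨j, m, le_rfl, hs⟩

lemma setOf_runBy_eq_iUnion_streak (n : ℕ) :
    {ω | RunBy X h ω n} = ⋃ (ℓ : α) (m : ℕ) (_ : m + h ≤ n), streak X ℓ m h := by
  ext ω
  simp [RunBy, streak]

lemma streak_before_firstRun (hh : 0 < h) (hω : ω ∈ runOccurs X h) :
    h ≤ firstRun X h ω ∧ ∀ i < h, X (firstRun X h ω - h + i) ω = X (firstRun X h ω - 1) ω := by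
  obtain ⟨ℓ, m, hm, hrun⟩ := runBy_firstRun hω
  have hend : m + h = firstRun X h ω := le_antisymm hm (firstRun_le ⟨ℓ, m, le_rfl, hrun⟩)
  refine ⟨by omega, fun i hi => ?_⟩
  rw [show firstRun X h ω - 1 = m + (h - 1) by omega, show firstRun X h ω - h = m by omega,
    hrun i hi, hrun _ (by omega)]

lemma iUnion_firstRun_eq_inter_streak {k : ℕ} (hk : 0 < k) (hkh : k ≤ h) (j : α) :
    ⋃ m, {ω | firstRun X h ω = m + k} ∩ streak X j m k = firstRunOf X h j := by
  ext ω
  simp only [Set.mem_iUnion, Set.mem_inter_iff, Set.mem_ofPred_eq, streak, firstRunOf]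
  constructor
  · rintro ⟨m, hτ, hs⟩
    refine ⟨mem_runOccurs_of_firstRun_pos (by omega), ?_⟩
    rw [hτ, show m + k - 1 = m + (k - 1) by omega]
    exact hs _ (by omega)
  · rintro ⟨hω, hj⟩
    obtain ⟨hhτ, hrun⟩ := streak_before_firstRun (by omega) hω
    refine ⟨firstRun X h ω - k, by omega, fun i hi => ?_⟩
    rw [show firstRun X h ω - k + i = firstRun X h ω - h + (h - k + i) by omega,
      hrun _ (by omega), hj]

lemma pairwise_disjoint_firstRun_eq_inter_streak (j : α) (k : ℕ) :
    Pairwise (Function.onFun Disjoint fun m => {ω | firstRun X h ω = m + k} ∩ streak X j m k) :=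
  fun m m' hne => Set.disjoint_left.2 fun ω ⟨hm, _⟩ ⟨hm', _⟩ => hne (by simp_all)

end Words

section Measurability

variable {Ω α : Type*} [MeasurableSpace α] {X : ℕ → Ω → α} {h : ℕ}

abbrev past (X : ℕ → Ω → α) (n : ℕ) : MeasurableSpace Ω :=
  ⨆ i ∈ Set.Iio n, MeasurableSpace.comap (X i) ‹_›

lemma past_mono {n n' : ℕ} (hn : n ≤ n') : past X n ≤ past X n' :=
  biSup_mono fun _ hi => lt_of_lt_of_le hi hn

lemma past_le [MeasurableSpace Ω] (hmeas : ∀ n, Measurable (X n)) (n : ℕ) :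
    past X n ≤ ‹MeasurableSpace Ω› :=
  iSup₂_le fun i _ => (hmeas i).comap_le

lemma measurableSet_past_letter [MeasurableSingletonClass α] {i n : ℕ} (hi : i < n) (j : α) :
    MeasurableSet[past X n] {ω | X i ω = j} := by
  have hle : MeasurableSpace.comap (X i) ‹_› ≤ past X n :=
    le_iSup₂ (f := fun i (_ : i ∈ Set.Iio n) => MeasurableSpace.comap (X i) ‹_›) i hi
  exact hle _ (comap_measurable (X i) (measurableSet_singleton j))

lemma measurableSet_past_streak [MeasurableSingletonClass α] {m k n : ℕ} (hn : m + k ≤ n)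
    (j : α) : MeasurableSet[past X n] (streak X j m k) := by
  simp only [streak, Set.ofPred_forall]
  exact MeasurableSet.iInter fun i => MeasurableSet.iInter fun hi =>
    measurableSet_past_letter (by omega) j

lemma measurableSet_past_noRun [MeasurableSingletonClass α] [Countable α] (n : ℕ) :
    MeasurableSet[past X n] (noRun X h n) := by
  rw [show noRun X h n = {ω | RunBy X h ω n}ᶜ from rfl, setOf_runBy_eq_iUnion_streak]
  exact .compl <| .iUnion fun ℓ => .iUnion fun m => .iUnion fun hm =>
    measurableSet_past_streak hm ℓ

lemma measurableSet_noRun [MeasurableSpace Ω] [MeasurableSingletonClass α] [Countable α]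
    (hmeas : ∀ n, Measurable (X n)) (n : ℕ) : MeasurableSet (noRun X h n) :=
  past_le hmeas n _ (measurableSet_past_noRun n)

lemma measurableSet_runOccurs [MeasurableSpace Ω] [MeasurableSingletonClass α] [Countable α]
    (hmeas : ∀ n, Measurable (X n)) : MeasurableSet (runOccurs X h) := by
  rw [runOccurs_eq_iUnion_compl_noRun]
  exact .iUnion fun n => (measurableSet_noRun hmeas n).compl

lemma measurable_firstRun [MeasurableSpace Ω] [MeasurableSingletonClass α] [Countable α]
    (hmeas : ∀ n, Measurable (X n)) : Measurable (firstRun X h) := by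
  refine measurable_of_Ioi fun n => ?_
  change MeasurableSet {ω | n < firstRun X h ω}
  rw [setOf_lt_firstRun]
  exact (measurableSet_noRun hmeas n).inter (measurableSet_runOccurs hmeas)

lemma measure_inter_letter_eq_mul [MeasurableSpace Ω] [MeasurableSingletonClass α]
    {μ : Measure Ω} (hmeas : ∀ n, Measurable (X n))
    (hindep : iIndepFun X μ) {n : ℕ} {E : Set Ω} (hE : MeasurableSet[past X n] E) (j : α) :
    μ (E ∩ {ω | X n ω = j}) = μ E * μ {ω | X n ω = j} := by
  have hind : Indep (past X n) (MeasurableSpace.comap (X n) ‹_›) μ := by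
    simpa [past] using indep_iSup_of_disjoint (fun i => (hmeas i).comap_le)
      ((iIndepFun_iff_iIndep _ _ _).1 hindep) (S := Set.Iio n) (T := {n}) (by simp)
  exact (Indep_iff _ _ μ).1 hind E _ hE (comap_measurable _ (measurableSet_singleton j))

end Measurability

section Expectation

variable {Ω α : Type*} [MeasurableSpace Ω] [MeasurableSpace α] [MeasurableSingletonClass α]
  [Countable α] {μ : Measure Ω} {X : ℕ → Ω → α} {h : ℕ}

lemma measurableSet_firstRun_eq_inter_streak (hmeas : ∀ n, Measurable (X n)) (j : α)
    (m k : ℕ) : MeasurableSet ({ω | firstRun X h ω = m + k} ∩ streak X j m k) :=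
  (measurable_firstRun hmeas (measurableSet_singleton _)).inter
    (past_le hmeas _ _ (measurableSet_past_streak le_rfl j))

lemma measure_noRun_inter_streak_mul (hmeas : ∀ n, Measurable (X n)) (hindep : iIndepFun X μ)
    (j : α) (m k : ℕ) :
    μ (noRun X h (m + k) ∩ streak X j m k) * μ {ω | X (m + k) ω = j}
      = μ (noRun X h (m + (k + 1)) ∩ streak X j m (k + 1))
        + μ ({ω | firstRun X h ω = m + (k + 1)} ∩ streak X j m (k + 1)) := by
  rw [← measure_inter_letter_eq_mul hmeas hindep
      ((measurableSet_past_noRun _).inter (measurableSet_past_streak le_rfl j)) j,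
    Set.inter_assoc, ← streak_succ, noRun_eq_union, Set.union_inter_distrib_right]
  exact measure_union ((disjoint_noRun_firstRun_eq _).mono Set.inter_subset_left
    Set.inter_subset_left) (measurableSet_firstRun_eq_inter_streak hmeas j m (k + 1))

lemma measure_noRun_eq_sum [IsFiniteMeasure μ] (hmeas : ∀ n, Measurable (X n))
    (hindep : iIndepFun X μ) (j : α) {q : ℝ≥0∞} (hq : ∀ n, μ {ω | X n ω = j} = q) (hq0 : q ≠ 0)
    (m : ℕ) :
    μ (noRun X h m)
      = ∑ k ∈ Finset.Icc 1 h, q⁻¹ ^ k * μ ({ω | firstRun X h ω = m + k} ∩ streak X j m k) := by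
  have hqtop : q ≠ ⊤ := hq 0 ▸ measure_ne_top μ _
  simpa [streak_zero] using Finset.sum_Icc_pow_mul_of_recurrence
    (a := fun k => μ (noRun X h (m + k) ∩ streak X j m k)) (c := q⁻¹)
    (fun k _ => by
      rw [← measure_noRun_inter_streak_mul hmeas hindep, hq, mul_comm,
        ENNReal.mul_inv_cancel_right hq0 hqtop])
    (by simp only [noRun_inter_streak_self, measure_empty])

lemma tsum_measure_noRun [IsFiniteMeasure μ] (hmeas : ∀ n, Measurable (X n))
    (hindep : iIndepFun X μ) (j : α) {q : ℝ≥0∞}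
    (hq : ∀ n, μ {ω | X n ω = j} = q) (hq0 : q ≠ 0) :
    ∑' m, μ (noRun X h m) = (∑ k ∈ Finset.Icc 1 h, q⁻¹ ^ k) * μ (firstRunOf X h j) := by
  calc ∑' m, μ (noRun X h m)
      = ∑' m, ∑ k ∈ Finset.Icc 1 h,
          q⁻¹ ^ k * μ ({ω | firstRun X h ω = m + k} ∩ streak X j m k) :=
        tsum_congr (measure_noRun_eq_sum hmeas hindep j hq hq0)
    _ = ∑ k ∈ Finset.Icc 1 h,
          q⁻¹ ^ k * ∑' m, μ ({ω | firstRun X h ω = m + k} ∩ streak X j m k) := by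
        rw [Summable.tsum_finsetSum fun _ _ => ENNReal.summable]
        simp_rw [ENNReal.tsum_mul_left]
    _ = ∑ k ∈ Finset.Icc 1 h, q⁻¹ ^ k * μ (firstRunOf X h j) := by
        refine Finset.sum_congr rfl fun k hk => ?_
        obtain ⟨hk1, hkh⟩ := Finset.mem_Icc.1 hk
        rw [← measure_iUnion (pairwise_disjoint_firstRun_eq_inter_streak j k)
          (fun m => measurableSet_firstRun_eq_inter_streak hmeas j m k),
          iUnion_firstRun_eq_inter_streak hk1 hkh]
    _ = (∑ k ∈ Finset.Icc 1 h, q⁻¹ ^ k) * μ (firstRunOf X h j) := (Finset.sum_mul ..).symm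

lemma measure_compl_runOccurs [IsFiniteMeasure μ] (hmeas : ∀ n, Measurable (X n))
    (hindep : iIndepFun X μ) (j : α) {q : ℝ≥0∞}
    (hq : ∀ n, μ {ω | X n ω = j} = q) (hq0 : q ≠ 0) : μ (runOccurs X h)ᶜ = 0 := by
  have hfin : ∑' m, μ (noRun X h m) ≠ ⊤ := by
    rw [tsum_measure_noRun hmeas hindep j hq hq0]
    exact ENNReal.mul_ne_top (ENNReal.sum_ne_top.2 fun k _ =>
      ENNReal.pow_ne_top (ENNReal.inv_ne_top.2 hq0)) (measure_ne_top μ _)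
  refine le_antisymm (ge_of_tendsto' (ENNReal.tendsto_atTop_zero_of_tsum_ne_top hfin)
    fun m => measure_mono fun ω hω hrun => hω ⟨m, hrun⟩) bot_le

lemma lintegral_firstRun (hmeas : ∀ n, Measurable (X n)) (hnull : μ (runOccurs X h)ᶜ = 0) :
    ∫⁻ ω, (firstRun X h ω : ℝ≥0∞) ∂μ = ∑' m, μ (noRun X h m) := by
  rw [lintegral_natCast_eq_tsum_measure_lt (measurable_firstRun hmeas)]
  simp_rw [setOf_lt_firstRun, measure_inter_conull hnull]

lemma measurableSet_firstRunOf (hmeas : ∀ n, Measurable (X n)) (hh : 0 < h) (j : α) :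
    MeasurableSet (firstRunOf X h j) := by
  rw [← iUnion_firstRun_eq_inter_streak hh le_rfl j]
  exact .iUnion fun m => measurableSet_firstRun_eq_inter_streak hmeas j m h

lemma sum_measure_firstRunOf [Fintype α] (hmeas : ∀ n, Measurable (X n)) (hh : 0 < h) :
    ∑ j, μ (firstRunOf X h j) = μ (runOccurs X h) := by
  rw [← measure_biUnion_finset (fun i _ j _ hij => Set.disjoint_left.2 fun ω hi hj => hij
    (hi.2.symm.trans hj.2)) fun j _ => measurableSet_firstRunOf hmeas hh j]
  congr 1
  ext ω
  simp [firstRunOf]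

end Expectation

end Runs

theorem expectation_first_h_run_general {Ω : Type*} [MeasurableSpace Ω]
    (μ : Measure Ω) [IsProbabilityMeasure μ]
    (r h : ℕ) (hr : 1 ≤ r) (hh : 1 ≤ h)
    (p : Fin r → ℝ) (hp : ∀ i, 0 < p i ∧ p i < 1)
    (X : ℕ → Ω → Fin r) (hmeas : ∀ n, Measurable (X n))
    (hindep : iIndepFun X μ)
    (hdist : ∀ n k, μ {ω | X n ω = k} = ENNReal.ofReal (p k))
    (B₁ : Ω → ℕ)
    (hB : ∀ ω, B₁ ω
        = sInf {n | ∃ ℓ : Fin r, ∃ m, m + h ≤ n ∧ ∀ k < h, X (m + k) ω = ℓ}) :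
    ∫⁻ ω, (B₁ ω : ℝ≥0∞) ∂μ
      = ENNReal.ofReal
          (1 / ∑ i, 1 / ∑ k ∈ Finset.Icc 1 h, (1 / p i) ^ k) := by
  obtain rfl : B₁ = Runs.firstRun X h := funext hB
  have hq0 : ∀ j, ENNReal.ofReal (p j) ≠ 0 := fun j => (ENNReal.ofReal_pos.2 (hp j).1).ne'
  have hc : ∀ i, 0 < ∑ k ∈ Finset.Icc 1 h, (1 / p i) ^ k := fun i =>
    Finset.sum_pos (fun k _ => pow_pos (one_div_pos.2 (hp i).1) k) (Finset.nonempty_Icc.2 hh)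
  let j₀ : Fin r := ⟨0, hr⟩
  have hnull := Runs.measure_compl_runOccurs (h := h) hmeas hindep j₀ (hdist · j₀) (hq0 j₀)
  rw [ENNReal.ofReal_one_div_sum_one_div ⟨j₀, Finset.mem_univ _⟩ fun i _ => hc i]
  refine ENNReal.eq_inv_sum_inv_of_forall_eq_mul (w := fun j => μ (Runs.firstRunOf X h j))
    (fun j _ => (ENNReal.ofReal_pos.2 (hc j)).ne') (fun j _ => ENNReal.ofReal_ne_top)
    (fun j _ => ?_) ?_
  · rw [Runs.lintegral_firstRun hmeas hnull,
      Runs.tsum_measure_noRun hmeas hindep j (hdist · j) (hq0 j),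
      ENNReal.ofReal_sum_one_div_pow (hp j).1]
  · rw [Runs.sum_measure_firstRunOf hmeas hh,
      ← prob_compl_eq_zero_iff (Runs.measurableSet_runOccurs hmeas), hnull]

/-- Expected waiting time for the first completed `h`-run of any letter. -/
theorem expectation_first_h_run {Ω : Type*} [MeasurableSpace Ω]
    (μ : Measure Ω) [IsProbabilityMeasure μ]
    (r h : ℕ) (hr : 1 ≤ r) (hh : 1 ≤ h)
    (p : Fin r → ℝ) (hp : ∀ i, 0 < p i ∧ p i < 1) (hpsum : ∑ i, p i = 1)
    (X : ℕ → Ω → Fin r) (hmeas : ∀ n, Measurable (X n))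
    (hindep : iIndepFun X μ)
    (hdist : ∀ n k, μ {ω | X n ω = k} = ENNReal.ofReal (p k))
    (B₁ : Ω → ℕ)
    (hB : ∀ ω, B₁ ω
        = sInf {n | ∃ ℓ : Fin r, ∃ m, m + h ≤ n ∧ ∀ k < h, X (m + k) ω = ℓ}) :
    ∫⁻ ω, (B₁ ω : ℝ≥0∞) ∂μ
      = ENNReal.ofReal
          (1 / ∑ i, 1 / ∑ k ∈ Finset.Icc 1 h, (1 / p i) ^ k) :=
  expectation_first_h_run_general μ r h hr hh p hp X hmeas hindep hdist B₁ hB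
end

section
/- The number of words of length n over an r-letter alphabet containing no h-run (no h consecutive equal letters) has ordinary generating function 1/(1 − ∑_{i=1}^r (z − z^h)/(1 − z^h)) = (1 − z^h)/(1 − rz + (r−1)z^h) when each letter is given weight z. -/
/-!
Let `s n` count the words of length `n` with no `h`-run. Putting a letter in front of such a word
gives `r * s n` words of length `n + 1` whose tail has no `h`-run. Those that do contain an
`h`-run are exactly the words `a^h t` with `t` run-free of length `n + 1 - h` and not starting
with `a`: there are `r` of them when `t` is empty and `(r - 1) * s (n + 1 - h)` otherwise. For
`F = ∑ s n z^n` this reads `F - 1 = r z F - z^h ((r - 1) F + 1)`, that is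
`F (1 - r z + (r - 1) z^h) = 1 - z^h`.
-/

open PowerSeries List

variable {α : Type*} {h : ℕ} {t u w : List α}

def RunFree (h : ℕ) (w : List α) : Prop := ∀ a, ¬ replicate h a <:+: w

lemma RunFree.of_infix (hw : RunFree h w) (huw : u <:+: w) : RunFree h u :=
  fun a ha => hw a (ha.trans huw)

lemma runFree_nil (hh : 0 < h) : RunFree h ([] : List α) := fun a ha => by
  simp [infix_nil] at ha; omega

lemma runFree_cons_iff (hh : 0 < h) {a : α} :
    RunFree h (a :: u) ↔ ¬ replicate h a <+: a :: u ∧ RunFree h u := by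
  obtain ⟨k, rfl⟩ : ∃ k, h = k + 1 := ⟨h - 1, by omega⟩
  simp only [RunFree, infix_cons_iff, not_or, forall_and, replicate_succ, cons_prefix_cons,
    not_and, forall_eq, true_implies]

lemma not_replicate_prefix_replicate_append {j : ℕ} (hj : j < h) {a : α}
    (hta : t.head? ≠ some a) : ¬ replicate h a <+: replicate j a ++ t := by
  intro H
  have : replicate j a ++ [a] <+: replicate j a ++ t := by
    rw [← replicate_succ']
    exact (prefix_replicate_iff.mpr ⟨by simp; omega, by simp⟩).trans H
  obtain ⟨s, rfl⟩ := (prefix_append_right_inj _).mp this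
  simp at hta

lemma RunFree.replicate_append {k : ℕ} (hk : k < h) {a : α} (ht : RunFree h t)
    (hta : t.head? ≠ some a) : RunFree h (replicate k a ++ t) := by
  induction k with
  | zero => simpa
  | succ k ih =>
    rw [replicate_succ, cons_append, runFree_cons_iff (by omega), ← cons_append,
      ← replicate_succ]
    exact ⟨not_replicate_prefix_replicate_append hk hta, ih (by omega)⟩

lemma not_runFree_replicate_append (a : α) : ¬ RunFree h (replicate h a ++ t) :=
  fun H => H a (prefix_append _ _).isInfix

lemma RunFree.tail_replicate_append (hh : 0 < h) {a : α} (ht : RunFree h t)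
    (hta : t.head? ≠ some a) : RunFree h (replicate h a ++ t).tail := by
  obtain ⟨k, rfl⟩ : ∃ k, h = k + 1 := ⟨h - 1, by omega⟩
  exact ht.replicate_append (Nat.lt_succ_self k) hta

lemma exists_eq_replicate_append_of_runFree_tail (hh : 0 < h) (htail : RunFree h w.tail)
    (hw : ¬ RunFree h w) :
    ∃ a t, w = replicate h a ++ t ∧ RunFree h t ∧ t.head? ≠ some a := by
  obtain _ | ⟨a, u⟩ := w
  · exact absurd htail hw
  obtain ⟨t, ht⟩ : replicate h a <+: a :: u := by
    by_contra H
    exact hw ((runFree_cons_iff hh).mpr ⟨H, htail⟩)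
  obtain ⟨k, rfl⟩ : ∃ k, h = k + 1 := ⟨h - 1, by omega⟩
  obtain rfl : replicate k a ++ t = u := by simpa [replicate_succ] using ht
  refine ⟨a, t, by simp [replicate_succ], htail.of_infix (suffix_append _ _).isInfix,
    fun hta => ?_⟩
  obtain ⟨t', rfl⟩ := head?_eq_some_iff.mp hta
  exact htail a ⟨[], t', by simp [replicate_succ']⟩

section Counting

variable (α)

def runFreeWords (h n : ℕ) : Set (List α) := {w | w.length = n ∧ RunFree h w}

def headRunWords (h n : ℕ) : Set (List α) :=
  {w | w.length = n ∧ RunFree h w.tail ∧ ¬ RunFree h w}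

lemma runFreeWords_zero (hh : 0 < h) : runFreeWords α h 0 = {[]} := by
  ext w
  simp only [runFreeWords, length_eq_zero_iff, Set.mem_ofPred_eq, Set.mem_singleton_iff,
    and_iff_left_iff_imp]
  rintro rfl
  exact runFree_nil hh

lemma headRunWords_of_lt {n : ℕ} (hn : n < h) : headRunWords α h n = ∅ := by
  refine Set.eq_empty_of_forall_notMem fun w ⟨hw, _, hrun⟩ => hrun fun a ha => ?_
  have := ha.length_le
  simp only [length_replicate] at this
  omega

lemma headRunWords_add (hh : 0 < h) (m : ℕ) :
    headRunWords α h (m + h) = (fun p : α × List α => replicate h p.1 ++ p.2) ''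
      (Set.univ ×ˢ runFreeWords α h m \ {p | p.2.head? = some p.1}) := by
  ext w
  constructor
  · rintro ⟨hw, htail, hrun⟩
    obtain ⟨a, t, rfl, ht, hta⟩ := exists_eq_replicate_append_of_runFree_tail hh htail hrun
    exact ⟨(a, t), ⟨⟨trivial, by simp at hw ⊢; omega, ht⟩, hta⟩, rfl⟩
  · rintro ⟨⟨a, t⟩, ⟨⟨-, ht, hrun⟩, hta⟩, rfl⟩
    exact ⟨by simp [ht, add_comm], RunFree.tail_replicate_append hh hrun hta,
      not_runFree_replicate_append a⟩

lemma ncard_univ_prod_runFreeWords_inter_head (m : ℕ) :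
    (Set.univ ×ˢ runFreeWords α h m ∩ {p : α × List α | p.2.head? = some p.1}).ncard
      = if m = 0 then 0 else (runFreeWords α h m).ncard := by
  split_ifs with hm
  · convert Set.ncard_empty (α × List α)
    refine Set.eq_empty_of_forall_notMem ?_
    rintro ⟨a, t⟩ ⟨⟨-, (ht : t.length = m), -⟩, (hta : t.head? = some a)⟩
    rw [length_eq_zero_iff.mp (ht.trans hm)] at hta
    simp at hta
  · refine Set.ncard_congr (fun p _ => p.2) (fun p hp => hp.1.2) ?_ ?_
    · rintro ⟨a, t⟩ ⟨b, s⟩ ⟨-, (hta : t.head? = some a)⟩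
        ⟨-, (hsb : s.head? = some b)⟩ (rfl : t = s)
      rw [Option.some.inj (hta.symm.trans hsb)]
    · intro t ht
      have hne : t ≠ [] := ne_nil_of_length_pos (by rw [ht.1]; omega)
      exact ⟨(t.head hne, t), ⟨⟨trivial, ht⟩, head?_eq_some_head hne⟩, rfl⟩

variable [Finite α]

lemma runFreeWords_finite (h n : ℕ) : (runFreeWords α h n).Finite :=
  (List.finite_length_eq α n).subset fun _ hw => hw.1

lemma ncard_runFreeWords_add_ncard_headRunWords (n : ℕ) :
    (runFreeWords α h (n + 1)).ncard + (headRunWords α h (n + 1)).ncard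
      = Nat.card α * (runFreeWords α h n).ncard := by
  have hcons : {w : List α | w.length = n + 1 ∧ RunFree h w.tail}
      = (fun p : α × List α => p.1 :: p.2) '' (Set.univ ×ˢ runFreeWords α h n) := by
    ext (_ | ⟨a, w⟩) <;> simp [runFreeWords]
  have hfin : {w : List α | w.length = n + 1 ∧ RunFree h w.tail}.Finite :=
    (List.finite_length_eq α (n + 1)).subset fun _ hw => hw.1
  rw [← Set.ncard_univ, ← Set.ncard_prod, ← Set.ncard_image_of_injective _
    (fun p q hpq => Prod.ext (cons.inj hpq).1 (cons.inj hpq).2), ← hcons,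
    ← Set.ncard_inter_add_ncard_sdiff_eq_ncard _ {w | RunFree h w} hfin]
  congr 2
  · ext w
    simp only [runFreeWords, Set.mem_inter_iff, Set.mem_ofPred_eq]
    exact ⟨fun ⟨hn, hw⟩ => ⟨⟨hn, hw.of_infix (tail_suffix w).isInfix⟩, hw⟩,
      fun ⟨⟨hn, _⟩, hw⟩ => ⟨hn, hw⟩⟩
  · ext w
    simp [headRunWords, and_assoc]

-- That is, `#headRunWords (m + h) = (r - 1) * s m + [m = 0]`, stated without truncated `r - 1`.
lemma ncard_headRunWords_add (hh : 0 < h) (m : ℕ) :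
    (headRunWords α h (m + h)).ncard + (if m = 0 then 0 else (runFreeWords α h m).ncard)
      = Nat.card α * (runFreeWords α h m).ncard := by
  have hinj : Set.InjOn (fun p : α × List α => replicate h p.1 ++ p.2)
      (Set.univ ×ˢ runFreeWords α h m \ {p | p.2.head? = some p.1}) := by
    rintro ⟨a, t⟩ - ⟨b, s⟩ - (hab : replicate h a ++ t = replicate h b ++ s)
    obtain ⟨hr, rfl⟩ := append_inj hab (by simp)
    rw [(replicate_right_inj hh.ne').mp hr]
  rw [headRunWords_add α hh, hinj.ncard_image, ← ncard_univ_prod_runFreeWords_inter_head,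
    add_comm, Set.ncard_inter_add_ncard_sdiff_eq_ncard _ _
      (Set.finite_univ.prod (runFreeWords_finite α h m)), Set.ncard_prod, Set.ncard_univ]

end Counting

section GeneratingFunction

variable (R : Type*) [CommRing R] (α)

noncomputable def runFreeSeries (h : ℕ) : R⟦X⟧ :=
  mk fun n => ((runFreeWords α h n).ncard : R)

noncomputable def headRunSeries (h : ℕ) : R⟦X⟧ :=
  mk fun n => ((headRunWords α h n).ncard : R)

variable [Finite α]

lemma runFreeSeries_add_headRunSeries (hh : 0 < h) :
    runFreeSeries α R h + headRunSeries α R h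
      = 1 + C (Nat.card α : R) * X * runFreeSeries α R h := by
  ext (_ | n)
  · simp [runFreeSeries, headRunSeries, runFreeWords_zero α hh, headRunWords_of_lt α hh]
  · rw [mul_assoc]
    simp only [runFreeSeries, headRunSeries, map_add, coeff_mk, coeff_one, coeff_C_mul,
      coeff_succ_X_mul, Nat.add_one_ne_zero, ↓reduceIte, zero_add]
    exact_mod_cast congrArg (Nat.cast : ℕ → R)
      (ncard_runFreeWords_add_ncard_headRunWords α (h := h) n)

lemma headRunSeries_eq (hh : 0 < h) :
    headRunSeries α R h
      = X ^ h * (C (Nat.card α : R) * runFreeSeries α R h - (runFreeSeries α R h - 1)) := by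
  ext n
  rw [coeff_X_pow_mul']
  split_ifs with hn
  · obtain ⟨m, rfl⟩ := Nat.exists_eq_add_of_le' hn
    have key := ncard_headRunWords_add α hh m
    simp only [runFreeSeries, headRunSeries, coeff_mk, map_sub, coeff_C_mul, coeff_one,
      Nat.add_sub_cancel] at key ⊢
    split_ifs at key ⊢ with hm
    · subst hm
      rw [runFreeWords_zero α hh, Set.ncard_singleton] at key ⊢
      simp only [zero_add, add_zero, mul_one] at key
      simp [key]
    · rw [eq_sub_iff_add_eq, sub_zero]
      exact_mod_cast congrArg (Nat.cast : ℕ → R) key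
  · simp [headRunSeries, headRunWords_of_lt α (not_le.mp hn)]

theorem runFreeSeries_mul (hh : 0 < h) :
    runFreeSeries α R h * (1 - C (Nat.card α : R) * X + C ((Nat.card α : R) - 1) * X ^ h)
      = 1 - X ^ h := by
  rw [map_sub, map_one]
  linear_combination runFreeSeries_add_headRunSeries α R hh - headRunSeries_eq α R hh

end GeneratingFunction

/-- The ordinary generating function of words of length `n` over an `r`-letter
alphabet with no `h` consecutive equal letters is
`1/(1 - ∑_{i=1}^r (z - z^h)/(1 - z^h)) = (1 - z^h)/(1 - r z + (r-1) z^h)`. -/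
theorem no_h_run_words_generating_function (r h : ℕ) (hh : 2 ≤ h)
    (c : ℕ → ℕ)
    (hc : ∀ n, c n = Nat.card
        {w : List (Fin r) // w.length = n ∧ ∀ a, ¬ List.replicate h a <:+: w}) :
    (PowerSeries.mk fun n => (c n : ℚ))
        * (1 - PowerSeries.C (r : ℚ) * PowerSeries.X
            + PowerSeries.C ((r : ℚ) - 1) * PowerSeries.X ^ h)
      = 1 - PowerSeries.X ^ h ∧
    (PowerSeries.mk fun n => (c n : ℚ))
      = (1 - (∑ _i : Fin r, (PowerSeries.X - PowerSeries.X ^ h)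
              * PowerSeries.invOfUnit (1 - PowerSeries.X ^ h) 1))⁻¹ := by
  have hF : (mk fun n => (c n : ℚ)) = runFreeSeries (Fin r) ℚ h :=
    congrArg mk (funext fun n => congrArg Nat.cast (hc n))
  have hmul : runFreeSeries (Fin r) ℚ h * (1 - C (r : ℚ) * X + C ((r : ℚ) - 1) * X ^ h)
      = 1 - X ^ h := by
    simpa only [Nat.card_fin] using runFreeSeries_mul (Fin r) ℚ (h := h) (by omega)
  have hX : constantCoeff (X ^ h : ℚ⟦X⟧) = 0 := by simp [zero_pow (by omega : h ≠ 0)]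
  have hu : (1 - X ^ h : ℚ⟦X⟧) * invOfUnit (1 - X ^ h) 1 = 1 :=
    mul_invOfUnit _ _ (by simp [hX])
  rw [hF, eq_inv_iff_mul_eq_one (by simp [hX])]
  refine ⟨hmul, ?_⟩
  rw [map_sub, map_one, map_natCast] at hmul
  rw [Finset.sum_const, Finset.card_univ, Fintype.card_fin, nsmul_eq_mul]
  linear_combination
    invOfUnit (1 - X ^ h : ℚ⟦X⟧) 1 * hmul + (1 - runFreeSeries (Fin r) ℚ h) * hu
end
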